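/- Let c₁, c₂, c₃ be oriented circles whose discriminant D = Q(c₁ − c₂) · Q(c₁ − c₃) · Q(c₂ − c₃) is strictly positive. Then the oriented Apollonius problem for (c₁, c₂, c₃) has exactly 2 solutions. -/

import Mathlib

open RealInnerProductSpace

noncomputable section

/-- The Euclidean plane. -/
abbrev Pl := EuclideanSpace ℝ (Fin 2)

/-- The Lorentz quadratic form `Q(x, r) = ‖x‖² − r²` on the space of oriented circles. -/
def Q (c : Pl × ℝ) : ℝ := ‖c.1‖ ^ 2 - c.2 ^ 2

/-- Solutions of the oriented Apollonius problem for the oriented circles `c₁, c₂, c₃`: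
either an oriented circle `d` with `Q(d − cᵢ) = 0` for all `i`, or an oriented line
`(u, t)` (with `‖u‖ = 1`, representing `{p : ⟪u, p⟫ = t}`) tangent to every `cᵢ`,
i.e. `⟪u, xᵢ⟫ − t = rᵢ` for all `i`. The solution set is the disjoint union of the two. -/
def OrientedApolloniusSolutions (c₁ c₂ c₃ : Pl × ℝ) : Type :=
  {d : Pl × ℝ // Q (d - c₁) = 0 ∧ Q (d - c₂) = 0 ∧ Q (d - c₃) = 0} ⊕
  {l : Pl × ℝ // ‖l.1‖ = 1 ∧ ⟪l.1, c₁.1⟫ - l.2 = c₁.2 ∧ ⟪l.1, c₂.1⟫ - l.2 = c₂.2 ∧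
    ⟪l.1, c₃.1⟫ - l.2 = c₃.2}

/-!
Lie sphere geometry. Send an oriented circle `c = (x, r)` to `ĉ = (1, Q c, x, r)` and an oriented
line `(u, t)` to `(0, 2t, u, 1)` in `ℝ⁵`, equipped with the symmetric bilinear form
`⟨v, w⟩ = v₂w₂ + v₃w₃ − v₄w₄ − (v₀w₁ + v₁w₀)/2`. Then `⟨ĉ, d̂⟩ = −Q(d − c)/2`, tangency of a line
to `c` is orthogonality to `ĉ`, and the images are exactly the null vectors normalised by
`v₀ = 1` or `v₀ = 0, v₄ = 1`. So the solutions are in bijection with the null lines of the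
orthogonal complement `W` of `ĉ₁, ĉ₂, ĉ₃`, none of which lies in `{v₀ = v₄ = 0}`.

The Gram determinant of `ĉ₁, ĉ₂, ĉ₃` is `−D/4 < 0`, while every basis of `ℝ⁵` has positive Gram
determinant; splitting such a basis along `span ĉᵢ ⊕ W` shows that `W` is a plane whose Gram
determinant is negative. The null cone of such a plane is the union of two distinct lines, each
with exactly one normalised point.
-/

open Module Submodule Set Matrix

theorem Nat.card_sum_subtype_mem_eq {α β γ : Type*} {f : α → γ} {g : β → γ} {S : Set γ}
    (hf : f.Injective) (hg : g.Injective) (hfg : ∀ a b, f a ≠ g b)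
    (hS : S ⊆ range f ∪ range g) :
    Nat.card ({a // f a ∈ S} ⊕ {b // g b ∈ S}) = Nat.card S := by
  refine Nat.card_congr (Equiv.ofBijective
    (Sum.elim (fun a => ⟨f a, a.2⟩) (fun b => ⟨g b, b.2⟩)) ⟨?_, ?_⟩)
  · exact Function.Injective.sumElim
      (fun a a' h => Subtype.ext (hf (congrArg Subtype.val h)))
      (fun b b' h => Subtype.ext (hg (congrArg Subtype.val h)))
      (fun a b h => hfg a b (congrArg Subtype.val h))
  · rintro ⟨v, hv⟩
    rcases hS hv with ⟨a, rfl⟩ | ⟨b, rfl⟩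
    exacts [⟨Sum.inl ⟨a, hv⟩, rfl⟩, ⟨Sum.inr ⟨b, hv⟩, rfl⟩]

theorem exists_linear_factors_of_mul_lt_sq {A B C : ℝ} (h : A * C < B ^ 2) :
    ∃ a b c d : ℝ, a * d - b * c ≠ 0 ∧
      ∀ x y, A * x ^ 2 + 2 * B * x * y + C * y ^ 2 = (a * x + b * y) * (c * x + d * y) := by
  obtain ⟨s, hs_pos, hs⟩ : ∃ s : ℝ, 0 < s ∧ s ^ 2 = B ^ 2 - A * C :=
    ⟨√(B ^ 2 - A * C), Real.sqrt_pos.2 (by linarith), Real.sq_sqrt (by linarith)⟩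
  by_cases hA : A = 0
  · subst hA
    have hB : B ≠ 0 := by rintro rfl; linarith
    exact ⟨0, 1, 2 * B, C, by simpa using hB, fun x y => by ring⟩
  -- `A (A x² + 2 B x y + C y²) = (A x + (B - s) y) (A x + (B + s) y)`
  · refine ⟨1, (B - s) / A, A, B + s, by field_simp; linarith, fun x y => ?_⟩
    field_simp
    linear_combination y ^ 2 * hs

theorem exists_eq_smul_of_mul_add_mul_eq_zero {K : Type*} [Field K] {a b x y : K}
    (hab : a ≠ 0 ∨ b ≠ 0) (h : a * x + b * y = 0) : ∃ t, x = t * -b ∧ y = t * a := by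
  rcases hab with ha | hb
  · exact ⟨y / a, by field_simp; linear_combination h, by field_simp⟩
  · exact ⟨-x / b, by field_simp, by field_simp; linear_combination h⟩

namespace LinearMap.BilinForm

section Field

variable {K V : Type*} [Field K] [AddCommGroup V] [Module K V] (B : LinearMap.BilinForm K V)
  {ι κ : Type*}

def gram (v : ι → V) : Matrix ι ι K := Matrix.of fun i j => B (v i) (v j)

variable {B}

theorem IsSymm.apply_smul_add_smul_self (hB : B.IsSymm) (x y : K) (v w : V) :
    B (x • v + y • w) (x • v + y • w) = B v v * x ^ 2 + 2 * B v w * x * y + B w w * y ^ 2 := by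
  simp only [map_add, map_smul, LinearMap.add_apply, LinearMap.smul_apply, smul_eq_mul,
    hB.eq w v]
  ring

theorem mem_orthogonal_span_range_iff {u : ι → V} {v : V} :
    v ∈ B.orthogonal (span K (Set.range u)) ↔ ∀ i, B (u i) v = 0 := by
  refine ⟨fun h i => h _ (subset_span ⟨i, rfl⟩), fun h n hn => ?_⟩
  have : span K (Set.range u) ≤ LinearMap.ker (B.flip v) :=
    span_le.2 (Set.range_subset_iff.2 fun i => by simpa using h i)
  simpa using this hn

variable [Fintype ι]

theorem gram_mulVec_apply (u : ι → V) (a : ι → K) (k : ι) :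
    (gram B u *ᵥ a) k = B (u k) (∑ i, a i • u i) := by
  simp [gram, mulVec, dotProduct, mul_comm]

variable [DecidableEq ι]

theorem linearIndependent_of_det_gram_ne_zero {u : ι → V} (hu : (gram B u).det ≠ 0) :
    LinearIndependent K u := by
  refine Fintype.linearIndependent_iff.2 fun a ha => congrFun (eq_zero_of_mulVec_eq_zero hu ?_)
  ext k
  rw [gram_mulVec_apply, ha, map_zero, Pi.zero_apply]

theorem disjoint_orthogonal_of_det_gram_ne_zero {u : ι → V} (hu : (gram B u).det ≠ 0) :
    Disjoint (span K (Set.range u)) (B.orthogonal (span K (Set.range u))) := by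
  refine disjoint_def.2 fun x hxU hxW => ?_
  obtain ⟨a, rfl⟩ := (mem_span_range_iff_exists_fun K).1 hxU
  have : gram B u *ᵥ a = 0 := by
    ext k
    rw [gram_mulVec_apply]
    exact mem_orthogonal_span_range_iff.1 hxW k
  simp [eq_zero_of_mulVec_eq_zero hu this]

theorem finrank_orthogonal_add_card [FiniteDimensional K V] {u : ι → V}
    (hu : (gram B u).det ≠ 0) :
    finrank K (B.orthogonal (span K (Set.range u))) + Fintype.card ι = finrank K V := by
  set U := span K (Set.range u)
  have hU : finrank K U = Fintype.card ι :=
    finrank_span_eq_card (linearIndependent_of_det_gram_ne_zero hu)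
  have hge := finrank_add_finrank_orthogonal' (B := B) U
  have hle := finrank_sup_add_finrank_inf_eq U (B.orthogonal U)
  rw [(disjoint_orthogonal_of_det_gram_ne_zero hu).eq_bot, finrank_bot] at hle
  have := Submodule.finrank_le (U ⊔ B.orthogonal U)
  omega

theorem det_gram_sumElim [Fintype κ] [DecidableEq κ] {u : ι → V} {w : κ → V}
    (h : ∀ i j, B (u i) (w j) = 0) :
    (gram B (Sum.elim u w)).det = (gram B u).det * (gram B w).det := by
  have : gram B (Sum.elim u w) =
      fromBlocks (gram B u) 0 (Matrix.of fun j i => B (w j) (u i)) (gram B w) := by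
    ext (i | i) (j | j) <;> simp [gram, h]
  rw [this, det_fromBlocks_zero₁₂]

theorem linearIndependent_pair_of_det_ne_zero {w : Fin 2 → V} (hw : LinearIndependent K w)
    {a b c d : K} (h : a * d - b * c ≠ 0) :
    LinearIndependent K ![(-b) • w 0 + a • w 1, (-d) • w 0 + c • w 1] := by
  rw [LinearIndependent.pair_iff]
  intro s t hst
  have hcoeff := Fintype.linearIndependent_iff.1 hw ![-(s * b) - t * d, s * a + t * c] (by
    simp only [← hst, Fin.sum_univ_two, cons_val_zero, cons_val_one, cons_val_fin_one]
    module)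
  have h0 : -(s * b) - t * d = 0 := hcoeff 0
  have h1 : s * a + t * c = 0 := hcoeff 1
  constructor
  · refine (mul_eq_zero.1 (?_ : s * (a * d - b * c) = 0)).resolve_right h
    linear_combination c * h0 + d * h1
  · refine (mul_eq_zero.1 (?_ : t * (a * d - b * c) = 0)).resolve_right h
    linear_combination -a * h0 - b * h1

end Field

section Real

variable {V : Type*} [AddCommGroup V] [Module ℝ V] {B : LinearMap.BilinForm ℝ V}

theorem IsSymm.exists_nullCone_eq_union_of_det_gram_neg (hB : B.IsSymm) {w : Fin 2 → V}
    (hw : (gram B w).det < 0) :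
    ∃ p q : V, LinearIndependent ℝ ![p, q] ∧
      {v | v ∈ span ℝ (Set.range w) ∧ B v v = 0} = (ℝ ∙ p : Set V) ∪ (ℝ ∙ q : Set V) := by
  have hdisc : B (w 0) (w 0) * B (w 1) (w 1) < B (w 0) (w 1) ^ 2 := by
    rw [det_fin_two] at hw
    simp only [gram, of_apply, hB.eq (w 1) (w 0)] at hw
    linarith
  obtain ⟨a, b, c, d, hdet, hfac⟩ := exists_linear_factors_of_mul_lt_sq hdisc
  have mem_span_iff : ∀ v, v ∈ span ℝ (Set.range w) ↔ ∃ x y : ℝ, x • w 0 + y • w 1 = v := by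
    intro v
    rw [mem_span_range_iff_exists_fun]
    exact ⟨fun ⟨f, hf⟩ => ⟨f 0, f 1, by simpa [Fin.sum_univ_two] using hf⟩,
      fun ⟨x, y, h⟩ => ⟨![x, y], by simpa [Fin.sum_univ_two] using h⟩⟩
  have quad : ∀ x y : ℝ,
      B (x • w 0 + y • w 1) (x • w 0 + y • w 1) = (a * x + b * y) * (c * x + d * y) := by
    intro x y
    rw [hB.apply_smul_add_smul_self, hfac]
  refine ⟨(-b) • w 0 + a • w 1, (-d) • w 0 + c • w 1,
    linearIndependent_pair_of_det_ne_zero (linearIndependent_of_det_gram_ne_zero hw.ne) hdet, ?_⟩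
  have hab : a ≠ 0 ∨ b ≠ 0 := by
    by_contra! h
    simp [h.1, h.2] at hdet
  have hcd : c ≠ 0 ∨ d ≠ 0 := by
    by_contra! h
    simp [h.1, h.2] at hdet
  ext v
  simp only [Set.mem_ofPred_eq, Set.mem_union, SetLike.mem_coe, mem_span_singleton, mem_span_iff]
  constructor
  · rintro ⟨⟨x, y, rfl⟩, hnull⟩
    rw [quad] at hnull
    rcases mul_eq_zero.1 hnull with h | h
    · obtain ⟨t, rfl, rfl⟩ := exists_eq_smul_of_mul_add_mul_eq_zero hab h
      exact Or.inl ⟨t, by module⟩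
    · obtain ⟨t, rfl, rfl⟩ := exists_eq_smul_of_mul_add_mul_eq_zero hcd h
      exact Or.inr ⟨t, by module⟩
  · rintro (⟨t, rfl⟩ | ⟨t, rfl⟩)
    · refine ⟨⟨t * -b, t * a, by module⟩, ?_⟩
      rw [show t • ((-b) • w 0 + a • w 1) = (t * -b) • w 0 + (t * a) • w 1 by module, quad]
      ring
    · refine ⟨⟨t * -d, t * c, by module⟩, ?_⟩
      rw [show t • ((-d) • w 0 + c • w 1) = (t * -d) • w 0 + (t * c) • w 1 by module, quad]
      ring

end Real

end LinearMap.BilinForm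

namespace Apollonius

open LinearMap.BilinForm

def lieMatrix : Matrix (Fin 5) (Fin 5) ℝ :=
  !![0, -1 / 2, 0, 0, 0; -1 / 2, 0, 0, 0, 0; 0, 0, 1, 0, 0; 0, 0, 0, 1, 0; 0, 0, 0, 0, -1]

def lieForm : LinearMap.BilinForm ℝ (Fin 5 → ℝ) := Matrix.toBilin' lieMatrix

theorem lieForm_apply (v w : Fin 5 → ℝ) :
    lieForm v w = v 2 * w 2 + v 3 * w 3 - v 4 * w 4 - (v 0 * w 1 + v 1 * w 0) / 2 := by
  simp only [lieForm, lieMatrix, toBilin'_apply', dotProduct, mulVec, of_apply, cons_val',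
    cons_val_fin_one, Fin.sum_univ_five, cons_val_zero, cons_val_one, cons_val, zero_mul,
    zero_add, add_zero, one_mul, neg_mul, mul_neg]
  ring

theorem lieForm_isSymm : lieForm.IsSymm :=
  ⟨fun v w => by rw [lieForm_apply, lieForm_apply]; ring⟩

theorem det_lieMatrix : lieMatrix.det = 1 / 4 := by
  simp [lieMatrix, det_succ_row_zero, Fin.sum_univ_succ, Fin.succAbove]
  norm_num

theorem det_gram_lieForm_pos {ι : Type*} [Fintype ι] [DecidableEq ι] (b : Basis ι ℝ (Fin 5 → ℝ)) :
    0 < (lieForm.gram b).det := by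
  set e := b.indexEquiv (Pi.basisFun ℝ (Fin 5))
  have hreindex : lieForm.gram b = (lieForm.gram (b.reindex e)).submatrix e e := by
    ext i j
    simp [LinearMap.BilinForm.gram]
  rw [hreindex, det_submatrix_equiv_self]
  set P := (Pi.basisFun ℝ (Fin 5)).toMatrix (b.reindex e)
  have hgram : lieForm.gram (b.reindex e) = Pᵀ * lieMatrix * P := by
    rw [← toMatrix'_toBilin' lieMatrix, ← toMatrix_basisFun, ← lieForm,
      toMatrix_mul_basis_toMatrix]
    ext i j
    rw [toMatrix_apply]
    rfl
  have hP : P.det ≠ 0 := by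
    rw [← Basis.det_apply]
    exact ((Pi.basisFun ℝ (Fin 5)).isUnit_det _).ne_zero
  rw [hgram, det_mul, det_mul, det_transpose, det_lieMatrix]
  nlinarith [mul_self_pos.2 hP]

theorem exists_span_eq_orthogonal_of_det_gram_neg {u : Fin 3 → Fin 5 → ℝ}
    (hu : (lieForm.gram u).det < 0) :
    ∃ w : Fin 2 → Fin 5 → ℝ, span ℝ (Set.range w) = lieForm.orthogonal (span ℝ (Set.range u)) ∧
      (lieForm.gram w).det < 0 := by
  set W := lieForm.orthogonal (span ℝ (Set.range u))
  have hW : finrank ℝ W = 2 := by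
    have : finrank ℝ W + 3 = 5 := by
      simpa using finrank_orthogonal_add_card hu.ne
    omega
  let bW := finBasisOfFinrankEq ℝ W hW
  set w : Fin 2 → Fin 5 → ℝ := W.subtype ∘ bW
  have hspan : span ℝ (Set.range w) = W := by
    rw [Set.range_comp, span_image, bW.span_eq, map_subtype_top]
  have hindep : LinearIndependent ℝ (Sum.elim u w) :=
    (linearIndependent_of_det_gram_ne_zero hu.ne).sum_type
      (bW.linearIndependent.map' _ W.ker_subtype)
      (hspan ▸ disjoint_orthogonal_of_det_gram_ne_zero hu.ne)
  have hpos := det_gram_lieForm_pos (basisOfLinearIndependentOfCardEqFinrank hindep (by simp))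
  rw [coe_basisOfLinearIndependentOfCardEqFinrank,
    det_gram_sumElim (w := w) fun i j => mem_orthogonal_span_range_iff.1 (bW j).2 i] at hpos
  exact ⟨w, hspan, neg_of_mul_pos_right hpos hu.le⟩

def IsNormalized (v : Fin 5 → ℝ) : Prop := v 0 = 1 ∨ (v 0 = 0 ∧ v 4 = 1)

theorem IsNormalized.ne_zero {v : Fin 5 → ℝ} (hv : IsNormalized v) : v ≠ 0 := by
  rintro rfl
  rcases hv with h | ⟨-, h⟩ <;> simp at h

theorem IsNormalized.eq_one_of_smul {v : Fin 5 → ℝ} {t : ℝ} (hv : IsNormalized v)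
    (ht : IsNormalized (t • v)) : t = 1 := by
  rcases hv with h0 | ⟨h0, h4⟩ <;> rcases ht with ht0 | ⟨ht0, ht4⟩ <;> simp_all

theorem exists_isNormalized_smul {v : Fin 5 → ℝ} (h : v 0 ≠ 0 ∨ v 4 ≠ 0) :
    ∃ t : ℝ, IsNormalized (t • v) := by
  by_cases h0 : v 0 = 0
  · exact ⟨(v 4)⁻¹, Or.inr ⟨by simp [h0], by simp [h.resolve_left (not_not.2 h0)]⟩⟩
  · exact ⟨(v 0)⁻¹, Or.inl (by simp [h0])⟩

theorem exists_isNormalized_mem_span_singleton_eq {p : Fin 5 → ℝ} (hp : p 0 ≠ 0 ∨ p 4 ≠ 0) :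
    ∃ n, {v | v ∈ ℝ ∙ p ∧ IsNormalized v} = {n} := by
  obtain ⟨s, hs⟩ := exists_isNormalized_smul hp
  refine ⟨s • p, eq_singleton_iff_unique_mem.2 ⟨⟨smul_mem _ _ (mem_span_singleton_self p), hs⟩, ?_⟩⟩
  rintro v ⟨hv, hvn⟩
  obtain ⟨t, rfl⟩ := mem_span_singleton.1 hv
  have hs0 : s ≠ 0 := by
    rintro rfl
    exact hs.ne_zero (zero_smul _ _)
  have hts : t • p = (t / s) • s • p := by rw [smul_smul, div_mul_cancel₀ _ hs0]
  rw [hts] at hvn ⊢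
  rw [hs.eq_one_of_smul hvn, one_smul]

theorem ncard_isNormalized_union_span_singleton {p q : Fin 5 → ℝ}
    (hpq : LinearIndependent ℝ ![p, q]) (hp : p 0 ≠ 0 ∨ p 4 ≠ 0) (hq : q 0 ≠ 0 ∨ q 4 ≠ 0) :
    {v | v ∈ (ℝ ∙ p : Set (Fin 5 → ℝ)) ∪ (ℝ ∙ q : Set (Fin 5 → ℝ)) ∧ IsNormalized v}.ncard = 2 := by
  obtain ⟨m, hm⟩ := exists_isNormalized_mem_span_singleton_eq hp
  obtain ⟨n, hn⟩ := exists_isNormalized_mem_span_singleton_eq hq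
  have hm_mem : m ∈ {v | v ∈ ℝ ∙ p ∧ IsNormalized v} := hm ▸ mem_singleton m
  have hn_mem : n ∈ {v | v ∈ ℝ ∙ q ∧ IsNormalized v} := hn ▸ mem_singleton n
  have hmn : m ≠ n := by
    obtain ⟨a, rfl⟩ := mem_span_singleton.1 hm_mem.1
    obtain ⟨b, rfl⟩ := mem_span_singleton.1 hn_mem.1
    intro hab
    have ha : a = 0 := (LinearIndependent.pair_iff.1 hpq a (-b) (by rw [hab]; module)).1
    exact hm_mem.2.ne_zero (by rw [ha, zero_smul])
  rw [← ncard_pair hmn, insert_eq, ← hm, ← hn]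
  congr 1
  ext v
  simp only [mem_union, SetLike.mem_coe, mem_ofPred_eq, or_and_right]

theorem Q_eq_coords (c : Pl × ℝ) : Q c = c.1 0 ^ 2 + c.1 1 ^ 2 - c.2 ^ 2 := by
  simp [Q, EuclideanSpace.real_norm_sq_eq, Fin.sum_univ_two]

theorem Q_zero : Q 0 = 0 := by simp [Q]

theorem Q_sub_comm (c d : Pl × ℝ) : Q (c - d) = Q (d - c) := by
  simp only [Q_eq_coords, Prod.fst_sub, Prod.snd_sub, PiLp.sub_apply]
  ring

theorem inner_eq_coords (u x : Pl) : ⟪u, x⟫ = u 0 * x 0 + u 1 * x 1 := by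
  simp [PiLp.inner_apply, Fin.sum_univ_two, mul_comm]

def lieCircle (c : Pl × ℝ) : Fin 5 → ℝ := ![1, Q c, c.1 0, c.1 1, c.2]

def lieLine (l : Pl × ℝ) : Fin 5 → ℝ := ![0, 2 * l.2, l.1 0, l.1 1, 1]

theorem lieForm_lieCircle_lieCircle (c d : Pl × ℝ) :
    lieForm (lieCircle c) (lieCircle d) = -Q (d - c) / 2 := by
  simp only [lieCircle, Q_eq_coords, lieForm_apply, cons_val, cons_val_zero, cons_val_one,
    one_mul, mul_one, Prod.fst_sub, PiLp.sub_apply, Prod.snd_sub]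
  ring

theorem lieForm_lieCircle_lieLine (c l : Pl × ℝ) :
    lieForm (lieCircle c) (lieLine l) = ⟪l.1, c.1⟫ - l.2 - c.2 := by
  simp only [lieCircle, lieLine, lieForm_apply, inner_eq_coords, cons_val, cons_val_zero,
    cons_val_one, mul_one, one_mul, mul_zero, add_zero]
  ring

theorem lieForm_lieLine_self (l : Pl × ℝ) : lieForm (lieLine l) (lieLine l) = ‖l.1‖ ^ 2 - 1 := by
  simp only [lieLine, lieForm_apply, EuclideanSpace.real_norm_sq_eq, Fin.sum_univ_two, cons_val,
    cons_val_zero, cons_val_one, mul_one, zero_mul, mul_zero, add_zero]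
  ring

theorem lieCircle_injective : Function.Injective lieCircle := fun c d h =>
  Prod.ext (by ext i; fin_cases i; exacts [congrFun h 2, congrFun h 3]) (congrFun h 4)

theorem lieLine_injective : Function.Injective lieLine := fun l m h =>
  Prod.ext (by ext i; fin_cases i; exacts [congrFun h 2, congrFun h 3])
    (by simpa [lieLine] using congrFun h 1)

theorem lieCircle_ne_lieLine (c l : Pl × ℝ) : lieCircle c ≠ lieLine l := fun h => by
  simpa [lieCircle, lieLine] using congrFun h 0

theorem isNormalized_lieCircle (c : Pl × ℝ) : IsNormalized (lieCircle c) := Or.inl rfl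

theorem isNormalized_lieLine (l : Pl × ℝ) : IsNormalized (lieLine l) := Or.inr ⟨rfl, rfl⟩

theorem exists_eq_lieCircle_or_lieLine {v : Fin 5 → ℝ} (hv : lieForm v v = 0)
    (hn : IsNormalized v) : (∃ d, lieCircle d = v) ∨ ∃ l, lieLine l = v := by
  rw [lieForm_apply] at hv
  rcases hn with h0 | ⟨h0, h4⟩
  · refine Or.inl ⟨(!₂[v 2, v 3], v 4), ?_⟩
    ext i
    fin_cases i <;> simp [lieCircle, Q_eq_coords, h0]
    rw [h0] at hv
    linarith
  · refine Or.inr ⟨(!₂[v 2, v 3], v 1 / 2), ?_⟩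
    ext i
    fin_cases i <;> simp [lieLine, h0, h4]
    ring

theorem coord_ne_zero_of_lieForm_lieCircle_eq_zero {c : Pl × ℝ} {v : Fin 5 → ℝ}
    (hc : lieForm (lieCircle c) v = 0) (hv : lieForm v v = 0) (hne : v ≠ 0) :
    v 0 ≠ 0 ∨ v 4 ≠ 0 := by
  by_contra! h
  obtain ⟨h0, h4⟩ := h
  apply hne
  rw [lieForm_apply, h0, h4] at hv
  have h2 : v 2 = 0 := by nlinarith [sq_nonneg (v 2), sq_nonneg (v 3)]
  have h3 : v 3 = 0 := by nlinarith [sq_nonneg (v 2), sq_nonneg (v 3)]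
  have h1 : v 1 = 0 := by simpa [lieForm_apply, lieCircle, h0, h2, h3, h4] using hc
  ext i
  fin_cases i <;> simp [h0, h1, h2, h3, h4]

theorem det_gram_lieCircle (c₁ c₂ c₃ : Pl × ℝ) :
    (lieForm.gram ![lieCircle c₁, lieCircle c₂, lieCircle c₃]).det =
      -(Q (c₁ - c₂) * Q (c₁ - c₃) * Q (c₂ - c₃)) / 4 := by
  simp only [LinearMap.BilinForm.gram, det_fin_three, of_apply, cons_val_zero, cons_val_one,
    cons_val,
    lieForm_lieCircle_lieCircle, sub_self, Q_zero, Q_sub_comm c₃ c₂, Q_sub_comm c₂ c₁,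
    Q_sub_comm c₃ c₁]
  ring

def liftedSolutions (c₁ c₂ c₃ : Pl × ℝ) : Set (Fin 5 → ℝ) :=
  {v | v ∈ lieForm.orthogonal (span ℝ (range ![lieCircle c₁, lieCircle c₂, lieCircle c₃])) ∧
    lieForm v v = 0 ∧ IsNormalized v}

theorem mem_liftedSolutions_iff {c₁ c₂ c₃ : Pl × ℝ} {v : Fin 5 → ℝ} :
    v ∈ liftedSolutions c₁ c₂ c₃ ↔ (lieForm (lieCircle c₁) v = 0 ∧
      lieForm (lieCircle c₂) v = 0 ∧ lieForm (lieCircle c₃) v = 0) ∧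
      lieForm v v = 0 ∧ IsNormalized v := by
  rw [liftedSolutions, mem_ofPred_eq, mem_orthogonal_span_range_iff, Fin.forall_fin_succ,
    Fin.forall_fin_two]
  rfl

theorem lieCircle_mem_liftedSolutions_iff {c₁ c₂ c₃ d : Pl × ℝ} :
    lieCircle d ∈ liftedSolutions c₁ c₂ c₃ ↔
      Q (d - c₁) = 0 ∧ Q (d - c₂) = 0 ∧ Q (d - c₃) = 0 := by
  simp [mem_liftedSolutions_iff, lieForm_lieCircle_lieCircle, isNormalized_lieCircle, Q_zero]

theorem lieLine_mem_liftedSolutions_iff {c₁ c₂ c₃ l : Pl × ℝ} :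
    lieLine l ∈ liftedSolutions c₁ c₂ c₃ ↔ ‖l.1‖ = 1 ∧ ⟪l.1, c₁.1⟫ - l.2 = c₁.2 ∧
      ⟪l.1, c₂.1⟫ - l.2 = c₂.2 ∧ ⟪l.1, c₃.1⟫ - l.2 = c₃.2 := by
  simp only [mem_liftedSolutions_iff, lieForm_lieCircle_lieLine, lieForm_lieLine_self,
    isNormalized_lieLine, and_true, sub_eq_zero,
    pow_eq_one_iff_of_nonneg (norm_nonneg l.1) two_ne_zero]
  exact and_comm

theorem natCard_orientedApolloniusSolutions (c₁ c₂ c₃ : Pl × ℝ) :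
    Nat.card (OrientedApolloniusSolutions c₁ c₂ c₃) = Nat.card (liftedSolutions c₁ c₂ c₃) := by
  rw [← Nat.card_sum_subtype_mem_eq lieCircle_injective lieLine_injective lieCircle_ne_lieLine
    fun v hv => ?_]
  · exact Nat.card_congr (Equiv.sumCongr
      (Equiv.subtypeEquivRight fun d => lieCircle_mem_liftedSolutions_iff.symm)
      (Equiv.subtypeEquivRight fun l => lieLine_mem_liftedSolutions_iff.symm))
  · obtain ⟨-, hnull, hn⟩ := mem_liftedSolutions_iff.1 hv
    exact exists_eq_lieCircle_or_lieLine hnull hn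

theorem ncard_liftedSolutions {c₁ c₂ c₃ : Pl × ℝ}
    (hD : 0 < Q (c₁ - c₂) * Q (c₁ - c₃) * Q (c₂ - c₃)) :
    (liftedSolutions c₁ c₂ c₃).ncard = 2 := by
  have hu : (lieForm.gram ![lieCircle c₁, lieCircle c₂, lieCircle c₃]).det < 0 := by
    rw [det_gram_lieCircle]
    linarith
  obtain ⟨w, hwW, hw⟩ := exists_span_eq_orthogonal_of_det_gram_neg hu
  obtain ⟨p, q, hpq, hcone⟩ := lieForm_isSymm.exists_nullCone_eq_union_of_det_gram_neg hw
  rw [hwW] at hcone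
  have hcoord : ∀ v ∈ (ℝ ∙ p : Set (Fin 5 → ℝ)) ∪ (ℝ ∙ q : Set (Fin 5 → ℝ)), v ≠ 0 →
      v 0 ≠ 0 ∨ v 4 ≠ 0 := by
    rw [← hcone]
    rintro v ⟨hvW, hv⟩ hne
    exact coord_ne_zero_of_lieForm_lieCircle_eq_zero (mem_orthogonal_span_range_iff.1 hvW 0) hv hne
  rw [← ncard_isNormalized_union_span_singleton hpq
    (hcoord p (Or.inl (mem_span_singleton_self p)) (hpq.ne_zero 0))
    (hcoord q (Or.inr (mem_span_singleton_self q)) (hpq.ne_zero 1)), ← hcone]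
  simp only [liftedSolutions, mem_ofPred_eq, and_assoc]

end Apollonius

/-- If the discriminant `D = Q(c₁ − c₂) · Q(c₁ − c₃) · Q(c₂ − c₃)` is strictly positive,
the oriented Apollonius problem has exactly 2 solutions. -/
theorem oriented_apollonius_two_solutions (c₁ c₂ c₃ : Pl × ℝ)
    (hD : 0 < Q (c₁ - c₂) * Q (c₁ - c₃) * Q (c₂ - c₃)) :
    Nat.card (OrientedApolloniusSolutions c₁ c₂ c₃) = 2 := by
  rw [Apollonius.natCard_orientedApolloniusSolutions, Nat.card_coe_set_eq,
    Apollonius.ncard_liftedSolutions hD]
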